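/- The probability of the event Erasure_A satisfies K(1−p) · ( p(q−K)/(q−1) )^{K−1} ≤ P(Erasure_A) ≤ K(1−p)·p^{K−1}, and the left inequality is strict. -/

import Mathlib

open scoped BigOperators Classical

/-- Number of coordinates of `y` equal to the symbol `a`. -/
def cntY {A : Type*} [DecidableEq A] {K : ℕ} (y : Fin K → A) (a : A) : ℕ :=
  (Finset.univ.filter fun j => y j = a).card

/-- Erasure_A: the coordinates of `y` are pairwise distinct and some coordinate equals `c`. -/
def IsErasureA {A : Type*} {K : ℕ} (c : A) (y : Fin K → A) : Prop :=
  Function.Injective y ∧ ∃ j, y j = c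

/-- Erasure_B: the coordinates of `y` are pairwise distinct and no coordinate equals `c`. -/
def IsErasureB {A : Type*} {K : ℕ} (c : A) (y : Fin K → A) : Prop :=
  Function.Injective y ∧ ∀ j, y j ≠ c

/-- Success: some symbol occurs at least twice, strictly more often than every other symbol,
and that symbol equals `c`. -/
def IsSuccess {A : Type*} [DecidableEq A] {K : ℕ} (c : A) (y : Fin K → A) : Prop :=
  2 ≤ cntY y c ∧ ∀ a, a ≠ c → cntY y a < cntY y c

/-- Error: the complement of Erasure_A ∪ Erasure_B ∪ Success. -/
def IsError {A : Type*} [DecidableEq A] {K : ℕ} (c : A) (y : Fin K → A) : Prop :=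
  ¬(IsErasureA c y ∨ IsErasureB c y ∨ IsSuccess c y)

/-- Probability of the event `E` for a random vector `Y ∈ A^K` with i.i.d. coordinates,
each equal to `c` with probability `1 − p` and equal to each other fixed symbol with
probability `p/(q−1)`. -/
noncomputable def prEvent {A : Type*} [Fintype A] [DecidableEq A] (q K : ℕ) (p : ℝ)
    (c : A) (E : (Fin K → A) → Prop) : ℝ :=
  ∑ y : Fin K → A,
    (∏ j : Fin K, (if y j = c then 1 - p else p / ((q : ℝ) - 1))) *
      (if E y then 1 else 0)

/-!
A vector in Erasure_A has exactly one coordinate equal to `c`, so each has probability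
`(1 - p) (p / (q - 1)) ^ (K - 1)`. Counting injective vectors minus those avoiding `c` gives
`q.descFactorial K - (q - 1).descFactorial K = K * (q - 1).descFactorial (K - 1)` of them, and
`(q - 1).descFactorial (K - 1) = (q - 1)(q - 2) ⋯ (q - K + 1)` lies strictly above
`(q - K) ^ (K - 1)` and at most at `(q - 1) ^ (K - 1)`.
-/

open Finset

theorem Nat.succ_descFactorial_eq_mul_add (n k : ℕ) :
    (n + 1).descFactorial k = k * n.descFactorial (k - 1) + n.descFactorial k := by
  cases k with
  | zero => simp
  | succ k =>
    rw [Nat.succ_descFactorial_succ, Nat.descFactorial_succ, Nat.add_sub_cancel]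
    rcases le_or_gt k n with hkn | hnk
    · rw [← Nat.add_mul]
      congr 1
      omega
    · simp [Nat.descFactorial_eq_zero_iff_lt.2 hnk]

section Counting

variable {α β : Type*} [Fintype α] [Fintype β] [DecidableEq α] [DecidableEq β]

theorem card_filter_injective :
    #{y : α → β | Function.Injective y} = (Fintype.card β).descFactorial (Fintype.card α) := by
  rw [← Fintype.card_subtype, Fintype.card_congr (Equiv.subtypeInjectiveEquivEmbedding α β),
    Fintype.card_embedding_eq]

theorem card_filter_injective_forall_ne (c : β) :
    #{y : α → β | Function.Injective y ∧ ∀ j, y j ≠ c}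
      = (Fintype.card β - 1).descFactorial (Fintype.card α) := by
  let e : {y : α → β // Function.Injective y ∧ ∀ j, y j ≠ c}
      ≃ {g : α → {b : β // b ≠ c} // Function.Injective g} :=
    { toFun y := ⟨fun j => ⟨y.1 j, y.2.2 j⟩, fun _ _ h => y.2.1 (congrArg Subtype.val h)⟩
      invFun g := ⟨fun j => g.1 j, fun _ _ h => g.2 (Subtype.ext h), fun j => (g.1 j).2⟩
      left_inv _ := rfl
      right_inv _ := rfl }
  rw [← Fintype.card_subtype, Fintype.card_congr e, Fintype.card_subtype, card_filter_injective,
    Fintype.card_subtype_compl, Fintype.card_subtype_eq]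

theorem card_filter_injective_exists_eq (c : β) :
    #{y : α → β | Function.Injective y ∧ ∃ j, y j = c}
      = Fintype.card α * (Fintype.card β - 1).descFactorial (Fintype.card α - 1) := by
  have hsplit := card_filter_add_card_filter_not (s := {y : α → β | Function.Injective y})
    (fun y => ∃ j, y j = c)
  simp only [filter_filter, not_exists, ← ne_eq] at hsplit
  obtain ⟨n, hn⟩ := Nat.exists_eq_add_one.2 (Fintype.card_pos_iff.2 ⟨c⟩)
  rw [card_filter_injective, card_filter_injective_forall_ne, hn, Nat.add_sub_cancel,
    Nat.succ_descFactorial_eq_mul_add] at hsplit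
  rw [hn, Nat.add_sub_cancel]
  omega

end Counting

theorem Nat.sub_pow_lt_descFactorial {n k : ℕ} (hk : k ≠ 0) (hkn : k ≤ n) :
    (n - k) ^ k < n.descFactorial k :=
  calc (n - k) ^ k < (n + 1 - k) ^ k := Nat.pow_lt_pow_left (by omega) hk
    _ ≤ n.descFactorial k := Nat.pow_sub_le_descFactorial n k

theorem prod_ite_eq_pow_cntY {A M : Type*} [DecidableEq A] [CommMonoid M] {K : ℕ}
    (y : Fin K → A) (c : A) (a b : M) :
    ∏ j, (if y j = c then a else b) = a ^ cntY y c * b ^ (K - cntY y c) := by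
  rw [prod_ite, prod_const, prod_const, cntY, filter_not, card_sdiff_of_subset (filter_subset _ _),
    card_univ, Fintype.card_fin]

theorem cntY_eq_one_of_isErasureA {A : Type*} [DecidableEq A] {K : ℕ} {c : A} {y : Fin K → A}
    (hy : IsErasureA c y) : cntY y c = 1 := by
  obtain ⟨hinj, j, rfl⟩ := hy
  rw [cntY, card_eq_one]
  exact ⟨j, by ext i; simp [hinj.eq_iff]⟩

theorem prEvent_eq_card_mul {A : Type*} [Fintype A] [DecidableEq A] {q K : ℕ} {p : ℝ} {c : A}
    {E : (Fin K → A) → Prop} {w : ℝ}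
    (hw : ∀ y, E y → ∏ j, (if y j = c then 1 - p else p / ((q : ℝ) - 1)) = w) :
    prEvent q K p c E = #{y | E y} * w := by
  rw [prEvent, ← nsmul_eq_mul, ← sum_const, sum_filter]
  refine sum_congr rfl fun y _ => ?_
  split_ifs with hy
  · rw [mul_one, hw y hy]
  · rw [mul_zero]

theorem prEvent_isErasureA {A : Type*} [Fintype A] [DecidableEq A] (q K : ℕ) (p : ℝ) (c : A) :
    prEvent q K p c (IsErasureA c)
      = K * (1 - p) * (p / ((q : ℝ) - 1)) ^ (K - 1)
          * (Fintype.card A - 1).descFactorial (K - 1) := by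
  rw [prEvent_eq_card_mul fun y hy => by
      rw [prod_ite_eq_pow_cntY, cntY_eq_one_of_isErasureA hy, pow_one]]
  have hcard :
      #{y : Fin K → A | IsErasureA c y} = K * (Fintype.card A - 1).descFactorial (K - 1) := by
    have h := card_filter_injective_exists_eq (α := Fin K) c
    rw [Fintype.card_fin] at h
    -- the two filters carry different `Decidable` instances (classical vs. computable)
    convert h using 3
    rfl
  rw [hcard]
  push_cast
  ring

/-- K(1−p)(p(q−K)/(q−1))^{K−1} < P(Erasure_A) ≤ K(1−p)p^{K−1}. -/
theorem stmt8 {A : Type*} [Fintype A] [DecidableEq A] (q K : ℕ)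
    (hK : 2 ≤ K) (hq : K < q) (p : ℝ) (hp : p ∈ Set.Ioo (0 : ℝ) 1)
    (hA : Fintype.card A = q) (c : A) :
    (K : ℝ) * (1 - p) * (p * ((q : ℝ) - (K : ℝ)) / ((q : ℝ) - 1)) ^ (K - 1) <
      prEvent q K p c (IsErasureA c) ∧
    prEvent q K p c (IsErasureA c) ≤ (K : ℝ) * (1 - p) * p ^ (K - 1) := by
  obtain ⟨hp0, hp1⟩ := hp
  have hq1 : (0 : ℝ) < q - 1 := by
    linarith [show (1 : ℝ) < q by exact_mod_cast (show 1 < q by omega)]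
  set C := (K : ℝ) * (1 - p) * (p / ((q : ℝ) - 1)) ^ (K - 1)
  have hC : 0 < C := mul_pos (mul_pos (by exact_mod_cast (show 0 < K by omega)) (sub_pos.2 hp1))
    (pow_pos (div_pos hp0 hq1) _)
  have hlower : (((q - K) ^ (K - 1) : ℕ) : ℝ) < (q - 1).descFactorial (K - 1) := by
    rw [show q - K = q - 1 - (K - 1) by omega]
    exact_mod_cast Nat.sub_pow_lt_descFactorial (by omega) (by omega)
  have hupper : ((q - 1).descFactorial (K - 1) : ℝ) ≤ (((q - 1) ^ (K - 1) : ℕ) : ℝ) := by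
    exact_mod_cast Nat.descFactorial_le_pow _ _
  rw [Nat.cast_pow, Nat.cast_sub hq.le] at hlower
  rw [Nat.cast_pow, Nat.cast_pred (by omega)] at hupper
  rw [prEvent_isErasureA, hA]
  constructor
  · calc (K : ℝ) * (1 - p) * (p * ((q : ℝ) - K) / ((q : ℝ) - 1)) ^ (K - 1)
          = C * ((q : ℝ) - K) ^ (K - 1) := by rw [mul_div_right_comm, mul_pow]; ring
      _ < C * (q - 1).descFactorial (K - 1) := by gcongr
  · calc C * (q - 1).descFactorial (K - 1) ≤ C * ((q : ℝ) - 1) ^ (K - 1) := by gcongr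
      _ = (K : ℝ) * (1 - p) * p ^ (K - 1) := by
          rw [mul_assoc, ← mul_pow, div_mul_cancel₀ _ hq1.ne']
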